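/- Let φ be a C² function on a neighborhood of p₀ = (0, z₂⁰) ∈ ℂ² such that φ(z₁,z₂) ≤ φ(0,z₂⁰) - (Re z₂)²/log|z₁| + 2|z₁|²(1 - log|z₁|) for z₁ ≠ 0 in that neighborhood. Then φ(0,z₂) ≤ φ(0,z₂⁰) for all z₂ near z₂⁰, and hence ∂²φ/∂z₂∂z̄₂(p₀) ≤ 0; consequently if the complex Hessian ∂∂̄φ(p₀) is positive semidefinite, then det(∂∂̄φ(p₀)) = 0. -/

import Mathlib

/-!
Along the real slice `z₁ = t > 0` the bound tends to `φ(0, z₂⁰)` as `t → 0⁺`, because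
`1 / log t → 0` and `t² log t → 0`; continuity of `φ` then gives `φ(0, z₂) ≤ φ(0, z₂⁰)`.
So `t ↦ φ(0, z₂⁰ + t u)` has a local maximum at `0` for every `u`, and its second derivative
`D²φ(p₀)(u, u)` is `≤ 0`. For `u = 1, i` these sum to `4 Re ∂²φ/∂z₂∂z̄₂(p₀)`. A positive
semidefinite matrix with a nonpositive diagonal entry has that entry `0`, hence the
corresponding column vanishes and the determinant is `0`.
-/

open scoped ComplexOrder

/-- Wirtinger derivative `∂/∂z₁`. -/
noncomputable def wd1 (f : ℂ × ℂ → ℂ) (z : ℂ × ℂ) : ℂ :=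
  (fderiv ℝ f z (1, 0) - Complex.I * fderiv ℝ f z (Complex.I, 0)) / 2

/-- Wirtinger derivative `∂/∂z̄₁`. -/
noncomputable def wd1b (f : ℂ × ℂ → ℂ) (z : ℂ × ℂ) : ℂ :=
  (fderiv ℝ f z (1, 0) + Complex.I * fderiv ℝ f z (Complex.I, 0)) / 2

/-- Wirtinger derivative `∂/∂z₂`. -/
noncomputable def wd2 (f : ℂ × ℂ → ℂ) (z : ℂ × ℂ) : ℂ :=
  (fderiv ℝ f z (0, 1) - Complex.I * fderiv ℝ f z (0, Complex.I)) / 2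

/-- Wirtinger derivative `∂/∂z̄₂`. -/
noncomputable def wd2b (f : ℂ × ℂ → ℂ) (z : ℂ × ℂ) : ℂ :=
  (fderiv ℝ f z (0, 1) + Complex.I * fderiv ℝ f z (0, Complex.I)) / 2

/-- The complex Hessian `(u_{i j̄})` of `f` at `z`. -/
noncomputable def cHess (f : ℂ × ℂ → ℂ) (z : ℂ × ℂ) : Matrix (Fin 2) (Fin 2) ℂ :=
  !![wd1 (wd1b f) z, wd1 (wd2b f) z; wd2 (wd1b f) z, wd2 (wd2b f) z]

open Filter Topology Matrix

theorem IsLocalMax.nonpos_of_hasDerivAt_of_hasDerivAt {f f' : ℝ → ℝ} {a c : ℝ}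
    (hmax : IsLocalMax f a) (hf : ∀ᶠ x in 𝓝 a, HasDerivAt f (f' x) x)
    (hf' : HasDerivAt f' c a) : c ≤ 0 := by
  -- if `c > 0`, the second derivative test makes `a` a local minimum too, so `f` is locally
  -- constant and `c = 0`
  by_contra! hc
  have hderiv : deriv f =ᶠ[𝓝 a] f' := hf.mono fun x hx => hx.deriv
  have hmin : IsLocalMin f a :=
    isLocalMin_of_deriv_deriv_pos (by rwa [hderiv.deriv_eq, hf'.deriv])
      (by rw [hderiv.eq_of_nhds]; exact hmax.hasDerivAt_eq_zero hf.self_of_nhds)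
      hf.self_of_nhds.continuousAt
  have hconst : f =ᶠ[𝓝 a] fun _ => f a := (hmin.and hmax).mono fun _ h => le_antisymm h.2 h.1
  have hf'_zero : f' =ᶠ[𝓝 a] fun _ => 0 := by
    filter_upwards [hconst.eventuallyEq_nhds, hf] with x hx hfx
    exact hfx.unique ((hasDerivAt_const x (f a)).congr_of_eventuallyEq hx)
  exact hc.ne' (hf'.unique ((hasDerivAt_const a 0).congr_of_eventuallyEq hf'_zero))

theorem fderiv_fderiv_apply_self_nonpos_of_isLocalMax {E : Type*} [NormedAddCommGroup E]
    [NormedSpace ℝ E] {φ : E → ℝ} {p v : E}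
    (hmax : IsLocalMax (fun t : ℝ => φ (p + t • v)) 0)
    (hφ : ∀ᶠ x in 𝓝 p, DifferentiableAt ℝ φ x) (hφ' : DifferentiableAt ℝ (fderiv ℝ φ) p) :
    fderiv ℝ (fderiv ℝ φ) p v v ≤ 0 := by
  have hline : ∀ t : ℝ, HasDerivAt (fun t : ℝ => p + t • v) v t := fun t => by
    simpa using ((hasDerivAt_id t).smul_const v).const_add p
  have hcont : Tendsto (fun t : ℝ => p + t • v) (𝓝 0) (𝓝 p) :=
    Continuous.tendsto' (by fun_prop) 0 p (by simp)
  refine hmax.nonpos_of_hasDerivAt_of_hasDerivAt (f' := fun t => fderiv ℝ φ (p + t • v) v) ?_ ?_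
  · filter_upwards [hcont.eventually hφ] with t ht
    exact ht.hasFDerivAt.comp_hasDerivAt t (hline t)
  · exact ((ContinuousLinearMap.apply ℝ ℝ v).hasFDerivAt.comp p hφ'.hasFDerivAt)
      |>.comp_hasDerivAt_of_eq (0 : ℝ) (hline 0) (by simp)

theorem Matrix.PosSemidef.det_eq_zero_of_re_diag_nonpos {n 𝕜 : Type*} [Fintype n]
    [DecidableEq n] [RCLike 𝕜] {A : Matrix n n 𝕜} (hA : A.PosSemidef) {i : n}
    (hi : RCLike.re (A i i) ≤ 0) : A.det = 0 := by
  have hAii : A i i = 0 := by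
    obtain ⟨hre, him⟩ := RCLike.nonneg_iff.1 hA.diag_nonneg
    exact RCLike.ext (by simpa using le_antisymm hi hre) (by simpa using him)
  have hcol : A *ᵥ Pi.single i 1 = 0 :=
    (hA.dotProduct_mulVec_zero_iff _).1 (by simp [hAii])
  exact det_eq_zero_of_column_eq_zero i fun j => by simpa using congrFun hcol j

theorem tendsto_div_log_nhdsGT_zero (a : ℝ) :
    Tendsto (fun t => a / Real.log t) (𝓝[>] 0) (𝓝 0) :=
  tendsto_const_nhds.div_atBot Real.tendsto_log_nhdsGT_zero

theorem tendsto_sq_mul_one_sub_log_nhdsGT_zero :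
    Tendsto (fun t => t ^ 2 * (1 - Real.log t)) (𝓝[>] 0) (𝓝 0) := by
  have h : Tendsto (fun t => t * (t - t * Real.log t)) (𝓝 0) (𝓝 0) :=
    Continuous.tendsto' (by fun_prop) 0 0 (by simp)
  exact (h.mono_left nhdsWithin_le_nhds).congr fun t => by ring

theorem wd2b_ofReal {φ : ℂ × ℂ → ℝ} {z : ℂ × ℂ} (hφ : DifferentiableAt ℝ φ z) :
    wd2b (fun z => (φ z : ℂ)) z =
      ((fderiv ℝ φ z (0, 1) : ℂ) + Complex.I * (fderiv ℝ φ z (0, Complex.I) : ℂ)) / 2 := by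
  have h : HasFDerivAt (fun z => (φ z : ℂ)) (Complex.ofRealCLM.comp (fderiv ℝ φ z)) z :=
    Complex.ofRealCLM.hasFDerivAt.comp z hφ.hasFDerivAt
  simp [wd2b, h.fderiv]

theorem re_wd2_wd2b_ofReal {φ : ℂ × ℂ → ℝ} {p : ℂ × ℂ}
    (hφ : ∀ᶠ z in 𝓝 p, DifferentiableAt ℝ φ z) (hφ' : DifferentiableAt ℝ (fderiv ℝ φ) p) :
    (wd2 (wd2b fun z => (φ z : ℂ)) p).re =
      (fderiv ℝ (fderiv ℝ φ) p (0, 1) (0, 1) +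
        fderiv ℝ (fderiv ℝ φ) p (0, Complex.I) (0, Complex.I)) / 4 := by
  set A := fderiv ℝ (fderiv ℝ φ) p
  have hpartial : ∀ v : ℂ × ℂ, HasFDerivAt (fun z => (fderiv ℝ φ z v : ℂ))
      (Complex.ofRealCLM.comp ((ContinuousLinearMap.apply ℝ ℝ v).comp A)) p := fun v =>
    Complex.ofRealCLM.hasFDerivAt.comp p
      ((ContinuousLinearMap.apply ℝ ℝ v).hasFDerivAt.comp p hφ'.hasFDerivAt)
  have hwd2b : HasFDerivAt (wd2b fun z => (φ z : ℂ)) _ p :=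
    (((hpartial (0, 1)).add ((hpartial (0, Complex.I)).const_mul Complex.I)).mul_const (2⁻¹ : ℂ))
      |>.congr_of_eventuallyEq (hφ.mono fun z hz => by simp [wd2b_ofReal hz, div_eq_mul_inv])
  rw [wd2, hwd2b.fderiv]
  simp only [smul_add, _root_.add_apply, _root_.smul_apply, ContinuousLinearMap.comp_apply,
    ContinuousLinearMap.apply_apply, Complex.ofRealCLM_apply, smul_eq_mul, Complex.div_ofNat_re,
    Complex.sub_re, Complex.add_re, Complex.mul_re, Complex.inv_re, Complex.re_ofNat,
    Complex.normSq_ofNat, div_self_mul_self', Complex.ofReal_re, Complex.inv_im, Complex.im_ofNat,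
    neg_zero, zero_div, Complex.ofReal_im, mul_zero, sub_zero, Complex.I_re, zero_mul, Complex.I_im,
    sub_self, Complex.mul_im, one_mul, zero_add, add_zero, Complex.add_im, zero_sub, sub_neg_eq_add]
  ring

theorem eventually_le_of_le_sub_div_log {φ : ℂ × ℂ → ℝ} {N : Set (ℂ × ℂ)} {z₂0 : ℂ}
    (hN : N ∈ 𝓝 ((0 : ℂ), z₂0)) (hφ : ContinuousOn φ N)
    (hineq : ∀ p ∈ N, p.1 ≠ 0 →
      φ p ≤ φ (0, z₂0) - (p.2.re) ^ 2 / Real.log (‖p.1‖)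
        + 2 * (‖p.1‖) ^ 2 * (1 - Real.log (‖p.1‖))) :
    ∀ᶠ z₂ in 𝓝 z₂0, φ (0, z₂) ≤ φ (0, z₂0) := by
  have hslice : Tendsto (fun z₂ : ℂ => ((0 : ℂ), z₂)) (𝓝 z₂0) (𝓝 (0, z₂0)) :=
    Continuous.tendsto' (by fun_prop) _ _ rfl
  filter_upwards [hslice.eventually (eventually_mem_nhds_iff.2 hN)] with z₂ hz₂
  have hpath : Tendsto (fun t : ℝ => ((t : ℂ), z₂)) (𝓝[>] 0) (𝓝 (0, z₂)) :=
    (Continuous.tendsto' (by fun_prop) 0 _ (by simp)).mono_left nhdsWithin_le_nhds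
  have hbound : Tendsto (fun t => φ (0, z₂0) - z₂.re ^ 2 / Real.log t
      + 2 * (t ^ 2 * (1 - Real.log t))) (𝓝[>] 0) (𝓝 (φ (0, z₂0))) := by
    simpa using (tendsto_const_nhds.sub (tendsto_div_log_nhdsGT_zero _)).add
      (tendsto_sq_mul_one_sub_log_nhdsGT_zero.const_mul 2)
  refine le_of_tendsto_of_tendsto ((hφ.continuousAt hz₂).tendsto.comp hpath) hbound ?_
  filter_upwards [hpath hz₂, self_mem_nhdsWithin] with t htN (ht : 0 < t)
  simpa [abs_of_pos ht, mul_assoc] using hineq _ htN (by simpa using ht.ne')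

theorem lower_test_function_det_zero (z₂0 : ℂ) (φ : ℂ × ℂ → ℝ) (N : Set (ℂ × ℂ))
    (hN : N ∈ nhds ((0 : ℂ), z₂0)) (hφ : ContDiffOn ℝ 2 φ N)
    (hineq : ∀ p ∈ N, p.1 ≠ 0 →
      φ p ≤ φ (0, z₂0) - (p.2.re) ^ 2 / Real.log (‖p.1‖)
        + 2 * (‖p.1‖) ^ 2 * (1 - Real.log (‖p.1‖))) :
    (∀ᶠ z₂ in nhds z₂0, φ (0, z₂) ≤ φ (0, z₂0)) ∧
    (wd2 (wd2b fun z => (φ z : ℂ)) ((0 : ℂ), z₂0)).re ≤ 0 ∧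
    ((cHess (fun z => (φ z : ℂ)) ((0 : ℂ), z₂0)).PosSemidef →
      (cHess (fun z => (φ z : ℂ)) ((0 : ℂ), z₂0)).det = 0) := by
  have hC2 : ContDiffAt ℝ 2 φ (0, z₂0) := hφ.contDiffAt hN
  have hdiff : ∀ᶠ z in 𝓝 (0, z₂0), DifferentiableAt ℝ φ z :=
    (hC2.eventually (by simp)).mono fun _ hz => hz.differentiableAt two_ne_zero
  have hdiff' : DifferentiableAt ℝ (fderiv ℝ φ) (0, z₂0) :=
    (hC2.fderiv_right (m := 1) le_rfl).differentiableAt one_ne_zero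
  have hmax := eventually_le_of_le_sub_div_log hN hφ.continuousOn hineq
  have hline : ∀ u : ℂ, IsLocalMax (fun t : ℝ => φ ((0, z₂0) + t • (0, u))) 0 := fun u => by
    have hu : Tendsto (fun t : ℝ => z₂0 + t • u) (𝓝 0) (𝓝 z₂0) :=
      Continuous.tendsto' (by fun_prop) 0 _ (by simp)
    filter_upwards [hu.eventually hmax] with t ht
    simpa using ht
  have hlap : (wd2 (wd2b fun z => (φ z : ℂ)) ((0 : ℂ), z₂0)).re ≤ 0 := by
    rw [re_wd2_wd2b_ofReal hdiff hdiff']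
    linarith [fderiv_fderiv_apply_self_nonpos_of_isLocalMax (hline 1) hdiff hdiff',
      fderiv_fderiv_apply_self_nonpos_of_isLocalMax (hline Complex.I) hdiff hdiff']
  exact ⟨hmax, hlap, fun hpsd => hpsd.det_eq_zero_of_re_diag_nonpos (i := 1) hlap⟩
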